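/- arXiv:1611.05529 — 3 statements merged into one kernel-verified Lean document; each statement's English description precedes it below -/
import Mathlib

section
/- Let I be a multi-interval (a finite disjoint union of nondegenerate compact intervals in ℝ) and let {I_i}_{i∈𝒥} be a family of multi-intervals contained in I which forms a 2-cover, i.e. there is a finite subset 𝒥' ⊆ 𝒥 such that for every pair of points (p,q) ∈ I × I there exists i ∈ 𝒥' with p ∈ I_i and q ∈ I_i. Then the union of the relative interiors of the I_i (interiors taken relative to I) equals the relative interior of I. -/
/-!
On each side of a point `x`, a multi-interval is either eventually full or eventually empty.
So a single point `p ∈ I` to the left of `x` (or `p = x` if `I` is empty there) detects these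
left germs simultaneously for the finitely many members of the subcover, and likewise a point `q`
to the right. A member `I_i` containing both `p` and `q` then contains `I` near `x`, and `x`
itself because it is closed.
-/

/-- A multi-interval: a finite disjoint union of nondegenerate compact intervals in ℝ. -/
def IsMultiInterval (V : Set ℝ) : Prop :=
  ∃ (n : ℕ) (a b : Fin n → ℝ),
    (∀ k, a k < b k) ∧
    (∀ k l, k ≠ l → Disjoint (Set.Icc (a k) (b k)) (Set.Icc (a l) (b l))) ∧
    V = ⋃ k, Set.Icc (a k) (b k)

/-- The relative interior of `V` inside `I`: the largest subset of `V` open in `I`. -/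
def relintIn (I V : Set ℝ) : Set ℝ :=
  {x | x ∈ V ∧ ∃ U : Set ℝ, IsOpen U ∧ x ∈ U ∧ U ∩ I ⊆ V}

open Filter Set Topology

namespace Filter

def Decides {α : Type*} (l : Filter α) (s : Set α) : Prop :=
  (∀ᶠ y in l, y ∈ s) ∨ ∀ᶠ y in l, y ∉ s

variable {α ι : Type*} {l : Filter α}

theorem Decides.iUnion [Finite ι] {s : ι → Set α} (hs : ∀ i, l.Decides (s i)) :
    l.Decides (⋃ i, s i) := by
  by_cases h : ∃ i, ∀ᶠ y in l, y ∈ s i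
  · obtain ⟨i, hi⟩ := h
    exact Or.inl (hi.mono fun y hy => mem_iUnion_of_mem i hy)
  · have hout : ∀ i, ∀ᶠ y in l, y ∉ s i := fun i => (hs i).resolve_left (not_exists.1 h i)
    refine Or.inr ((eventually_all.2 hout).mono fun y hy => ?_)
    simpa only [mem_iUnion, not_exists] using hy

theorem Decides.eventually_forall_mem_imp (F : Finset ι) {t : ι → Set α}
    (ht : ∀ i ∈ F, l.Decides (t i)) :
    ∀ᶠ y in l, ∀ i ∈ F, y ∈ t i → ∀ᶠ z in l, z ∈ t i := by
  refine (eventually_all_finset F).2 fun i hi => ?_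
  rcases ht i hi with hin | hout
  · exact Eventually.of_forall fun _ _ => hin
  · exact hout.mono fun _ hy hy' => absurd hy' hy

/-- Take `p = x` when `s` eventually avoids `l`, and otherwise a point of `s` so deep in `l`
that every `t i` is already constant there. -/
theorem Decides.exists_test_point [TopologicalSpace α] [l.NeBot] {x : α} (hlx : l ≤ 𝓝 x)
    {s : Set α} {t : ι → Set α} (F : Finset ι) (hs : l.Decides s)
    (ht : ∀ i ∈ F, l.Decides (t i)) (htc : ∀ i ∈ F, IsClosed (t i)) (hx : x ∈ s) :
    ∃ p ∈ s, ∀ i ∈ F, p ∈ t i → x ∈ t i ∧ ∀ᶠ y in l, y ∈ s → y ∈ t i := by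
  rcases hs with hin | hout
  · obtain ⟨p, hps, hp⟩ := (hin.and (Decides.eventually_forall_mem_imp F ht)).exists
    refine ⟨p, hps, fun i hi hpi => ?_⟩
    have hti : ∀ᶠ y in l, y ∈ t i := hp i hi hpi
    exact ⟨(htc i hi).mem_of_tendsto hlx hti, hti.mono fun _ hy _ => hy⟩
  · exact ⟨x, hx, fun i _ hxi => ⟨hxi, hout.mono fun _ hy hy' => absurd hy' hy⟩⟩

end Filter

section Icc

variable {α : Type*} [LinearOrder α] [TopologicalSpace α] [OrderTopology α]

theorem decides_Icc_nhdsLT (x a b : α) : (𝓝[<] x).Decides (Icc a b) := by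
  by_cases hx : x ∈ Ioc a b
  · exact Or.inl (mem_of_superset (Ioo_mem_nhdsLT hx.1) fun y hy => ⟨hy.1.le, hy.2.le.trans hx.2⟩)
  · rcases not_and_or.1 hx with ha | hb
    · exact Or.inr (mem_of_superset self_mem_nhdsWithin fun y hy hy' =>
        ha (hy'.1.trans_lt hy))
    · exact Or.inr (mem_of_superset (Ioo_mem_nhdsLT (not_le.1 hb)) fun y hy hy' =>
        hy.1.not_ge hy'.2)

theorem decides_Icc_nhdsGT (x a b : α) : (𝓝[>] x).Decides (Icc a b) := by
  by_cases hx : x ∈ Ico a b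
  · exact Or.inl (mem_of_superset (Ioo_mem_nhdsGT hx.2) fun y hy => ⟨hx.1.trans hy.1.le, hy.2.le⟩)
  · rcases not_and_or.1 hx with ha | hb
    · exact Or.inr (mem_of_superset (Ioo_mem_nhdsGT (not_le.1 ha)) fun y hy hy' =>
        hy.2.not_ge hy'.1)
    · exact Or.inr (mem_of_superset self_mem_nhdsWithin fun y hy hy' =>
        hb ((mem_Ioi.1 hy).trans_le hy'.2))

end Icc

namespace IsMultiInterval

variable {V : Set ℝ}

theorem isClosed (hV : IsMultiInterval V) : IsClosed V := by
  obtain ⟨n, a, b, -, -, rfl⟩ := hV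
  exact isClosed_iUnion_of_finite fun k => isClosed_Icc

theorem decides {l : Filter ℝ} (hl : ∀ a b, l.Decides (Icc a b)) (hV : IsMultiInterval V) :
    l.Decides V := by
  obtain ⟨n, a, b, -, -, rfl⟩ := hV
  exact Decides.iUnion fun k => hl (a k) (b k)

end IsMultiInterval

theorem mem_relintIn_iff {I V : Set ℝ} {x : ℝ} :
    x ∈ relintIn I V ↔ x ∈ V ∧ ∀ᶠ y in 𝓝 x, y ∈ I → y ∈ V := by
  refine and_congr_right fun _ => ⟨fun ⟨U, hU, hxU, hUV⟩ => ?_, fun h => ?_⟩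
  · exact mem_of_superset (hU.mem_nhds hxU) fun y hy hyI => hUV ⟨hy, hyI⟩
  · obtain ⟨U, hUV, hU, hxU⟩ := eventually_nhds_iff.1 h
    exact ⟨U, hU, hxU, fun y hy => hUV y hy.1 hy.2⟩

theorem relintIn_subset (I V : Set ℝ) : relintIn I V ⊆ V := fun _ hx => hx.1

theorem relintIn_self (I : Set ℝ) : relintIn I I = I :=
  (relintIn_subset I I).antisymm fun _ hx => mem_relintIn_iff.2 ⟨hx, Eventually.of_forall fun _ => id⟩

/-- If a family of multi-intervals contained in a multi-interval `I` forms a 2-cover of `I`,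
then the relative interiors (inside `I`) of the members cover the relative interior of `I`. -/
theorem multiInterval_two_cover_relint_union {𝒥 : Type*} (I : Set ℝ) (Ii : 𝒥 → Set ℝ)
    (hI : IsMultiInterval I) (hIi : ∀ i, IsMultiInterval (Ii i)) (hsub : ∀ i, Ii i ⊆ I)
    (hcov : ∃ 𝒥' : Finset 𝒥, ∀ p ∈ I, ∀ q ∈ I, ∃ i ∈ 𝒥', p ∈ Ii i ∧ q ∈ Ii i) :
    (⋃ i, relintIn I (Ii i)) = relintIn I I := by
  obtain ⟨F, hcov⟩ := hcov
  rw [relintIn_self]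
  refine (iUnion_subset fun i => (relintIn_subset I (Ii i)).trans (hsub i)).antisymm
    fun x hx => ?_
  have hclosed : ∀ i ∈ F, IsClosed (Ii i) := fun i _ => (hIi i).isClosed
  obtain ⟨p, hpI, hp⟩ := Decides.exists_test_point nhdsWithin_le_nhds F
    (hI.decides (decides_Icc_nhdsLT x)) (fun i _ => (hIi i).decides (decides_Icc_nhdsLT x))
    hclosed hx
  obtain ⟨q, hqI, hq⟩ := Decides.exists_test_point nhdsWithin_le_nhds F
    (hI.decides (decides_Icc_nhdsGT x)) (fun i _ => (hIi i).decides (decides_Icc_nhdsGT x))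
    hclosed hx
  obtain ⟨i, hiF, hpi, hqi⟩ := hcov p hpI q hqI
  obtain ⟨hxi, hleft⟩ := hp i hiF hpi
  obtain ⟨-, hright⟩ := hq i hiF hqi
  refine mem_iUnion.2 ⟨i, mem_relintIn_iff.2 ⟨hxi, ?_⟩⟩
  rw [← nhdsNE_sup_pure, ← nhdsLT_sup_nhdsGT]
  exact ⟨⟨hleft, hright⟩, fun _ => hxi⟩
end

section
/- Let X be a topological space and {V_i ⊆ X} a family of closed subsets such that ⋃_i (relint V_i)^n = X^n for every natural number n (a Weiss c-cover, where relint denotes relative interior in X). Then {V_i} is a 2-cover provided X is compact, i.e. if X is compact then there exists a finite subfamily {V_i}_{i∈𝒥'} with ⋃_{i∈𝒥'} V_i × V_i = X × X. -/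
open Set

theorem exists_finset_biUnion_eq_univ_of_iUnion_interior {Y ι : Type*}
    [TopologicalSpace Y] [CompactSpace Y] (s : ι → Set Y)
    (hs : ⋃ i, interior (s i) = univ) :
    ∃ t : Finset ι, ⋃ i ∈ t, s i = univ := by
  obtain ⟨t, ht⟩ := isCompact_univ.elim_finite_subcover (fun i ↦ interior (s i))
    (fun _ ↦ isOpen_interior) hs.ge
  exact ⟨t, eq_univ_of_univ_subset <| ht.trans <| iUnion₂_mono fun _ _ ↦ interior_subset⟩

theorem iUnion_interior_prod_self_eq_univ {X ι : Type*} [TopologicalSpace X] (V : ι → Set X)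
    (h : (⋃ i, {f : Fin 2 → X | ∀ k, f k ∈ interior (V i)}) = univ) :
    ⋃ i, interior (V i ×ˢ V i) = univ := by
  refine eq_univ_of_forall fun ⟨x, y⟩ ↦ ?_
  obtain ⟨i, hi⟩ := mem_iUnion.mp (h.ge (mem_univ ![x, y]))
  exact mem_iUnion.mpr ⟨i, by simpa only [interior_prod_eq] using ⟨hi 0, hi 1⟩⟩

theorem weiss_c_cover_is_two_cover_general {X : Type*} [TopologicalSpace X] {ι : Type*}
    (V : ι → Set X)
    (h : ∀ n : ℕ, (⋃ i, {f : Fin n → X | ∀ k, f k ∈ interior (V i)}) = Set.univ)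
    (hX : CompactSpace X) :
    ∃ 𝒥' : Finset ι, (⋃ i ∈ 𝒥', V i ×ˢ V i) = Set.univ := by
  have := hX
  exact exists_finset_biUnion_eq_univ_of_iUnion_interior _
    (iUnion_interior_prod_self_eq_univ V (h 2))

/-- A Weiss c-cover of a compact space by closed subsets (the `n`-fold products of the
relative interiors cover `Xⁿ` for every `n`) is a 2-cover: some finite subfamily satisfies
`⋃ Vᵢ × Vᵢ = X × X`. (For subsets of `X` itself, the relative interior is the interior.) -/
theorem weiss_c_cover_is_two_cover {X : Type*} [TopologicalSpace X] {ι : Type*}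
    (V : ι → Set X) (hV : ∀ i, IsClosed (V i))
    (h : ∀ n : ℕ, (⋃ i, {f : Fin n → X | ∀ k, f k ∈ interior (V i)}) = Set.univ)
    (hX : CompactSpace X) :
    ∃ 𝒥' : Finset ι, (⋃ i ∈ 𝒥', V i ×ˢ V i) = Set.univ :=
  weiss_c_cover_is_two_cover_general V h hX
end

section
/- Let I = [0,5] and let φ: I → I be an orientation-preserving homeomorphism fixing a neighborhood of the boundary {0,5}. Suppose {U_1, …, U_m} is a finite open cover of the open interval (0,5). Then φ can be written as a finite composition φ = φ_1 ∘ ⋯ ∘ φ_n of orientation-preserving homeomorphisms of I, each of which is the identity outside a compact subset of some U_{i_s}. -/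
/-!
Along the straight-line isotopy `x ↦ x + t (φ x - x)`, `φ` is a product of `N` homeomorphisms
that each move points by less than `ε`. Such a `g` is the product of the quotients
`h_{j+1} h_j⁻¹`, where `h_j` is `g` left of `c_j = a - 2ε + jε` and the identity right of
`c_j + 2ε`: `h_j` and `h_{j+1}` differ only on `(c_j, c_j + 3ε)`, so `h_{j+1} h_j⁻¹` is the
identity outside `h_j [c_j, c_j + 3ε] ⊆ [c_j - ε, c_j + 3ε]`, which lies in a single `U i`
once `2ε` is below a Lebesgue number of the cover.
-/

open Set Metric Filter

theorem Submonoid.apply_mem_of_mul_inv_mem {G : Type*} [Group G] (H : Submonoid G) (f : ℕ → G)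
    {n : ℕ} (h0 : f 0 ∈ H) (hstep : ∀ i < n, f (i + 1) * (f i)⁻¹ ∈ H) : f n ∈ H := by
  induction n with
  | zero => exact h0
  | succ n ih =>
    have := H.mul_mem (hstep n n.lt_succ_self) (ih fun i hi => hstep i (hi.trans n.lt_succ_self))
    rwa [inv_mul_cancel_right] at this

theorem OrderIso.mul_inv_apply_eq_self_outside {α : Type*} [LinearOrder α] {e f : α ≃o α}
    {p q : α} (h : ∀ x ∉ Ioo p q, f x = e x) {y : α} (hy : y ∉ Ioo (e p) (e q)) :
    (f * e⁻¹) y = y := by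
  obtain ⟨x, rfl⟩ := e.surjective y
  have hx : x ∉ Ioo p q := fun hx => hy ⟨e.strictMono hx.1, e.strictMono hx.2⟩
  rw [RelIso.mul_apply, RelIso.inv_apply_self, h x hx]

theorem OrderIso.coe_list_prod {α : Type*} [LE α] (l : List (α ≃o α)) :
    ⇑l.prod = (l.map (⇑)).foldr (· ∘ ·) id := by
  induction l with
  | nil => rfl
  | cons e l ih => rw [List.prod_cons, RelIso.coe_mul, ih]; rfl

theorem Continuous.exists_orderIso_of_eq_self_outside {f : ℝ → ℝ} (hc : Continuous f)
    (hm : StrictMono f) {a b : ℝ} (h : ∀ x ∉ Ioo a b, f x = x) : ∃ e : ℝ ≃o ℝ, ⇑e = f := by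
  have h_top : Tendsto f atTop atTop := tendsto_id.congr' <|
    (eventually_ge_atTop b).mono fun x hx => (h x fun hx' => not_lt.2 hx hx'.2).symm
  have h_bot : Tendsto f atBot atBot := tendsto_id.congr' <|
    (eventually_le_atBot a).mono fun x hx => (h x fun hx' => not_lt.2 hx hx'.1).symm
  exact ⟨hm.orderIsoOfSurjective f (hc.surjective h_top h_bot),
    hm.coe_orderIsoOfSurjective f _⟩

theorem StrictMono.add_mul_sub_self {f : ℝ → ℝ} (hf : StrictMono f) {t : ℝ} (ht₀ : 0 ≤ t)
    (ht₁ : t ≤ 1) : StrictMono fun x => x + t * (f x - x) := by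
  intro x y hxy
  have hfxy := hf hxy
  rcases ht₀.eq_or_lt with rfl | ht
  · simpa using hxy
  · nlinarith

theorem exists_orderIso_eq_add_mul_sub_self {φ : ℝ ≃o ℝ} {a b t : ℝ}
    (hφ : ∀ x ∉ Ioo a b, φ x = x) (ht₀ : 0 ≤ t) (ht₁ : t ≤ 1) :
    ∃ P : ℝ ≃o ℝ, ∀ x, P x = x + t * (φ x - x) := by
  have hc : Continuous fun x => x + t * (φ x - x) := by fun_prop
  obtain ⟨P, hP⟩ := hc.exists_orderIso_of_eq_self_outside (a := a) (b := b)
    (φ.strictMono.add_mul_sub_self ht₀ ht₁) fun x hx => by simp [hφ x hx]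
  exact ⟨P, congrFun hP⟩

variable {ι : Type*}

def fragments (U : ι → Set ℝ) : Set (ℝ ≃o ℝ) :=
  {f | ∃ i K, IsCompact K ∧ K ⊆ U i ∧ ∀ x ∉ K, f x = x}

variable {U : ι → Set ℝ}

theorem mem_fragments_of_eq_self_outside {f : ℝ ≃o ℝ} {p q : ℝ} {i : ι}
    (hU : Icc p q ⊆ U i) (hf : ∀ x ∉ Ioo p q, f x = x) : f ∈ fragments U :=
  ⟨i, Icc p q, isCompact_Icc, hU, fun x hx => hf x fun hx' => hx (Ioo_subset_Icc_self hx')⟩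

/-- Clamps `g x` between the barriers `max x (x + ε - (x - c) / 2)` and
`min x (x - ε + (x - c) / 2)`, which lie beyond `x ± ε` left of `c` and equal `x` right of
`c + 2 * ε`. -/
noncomputable def cutoff (g : ℝ → ℝ) (c ε x : ℝ) : ℝ :=
  max (min (g x) (max x (x + ε - (x - c) / 2))) (min x (x - ε + (x - c) / 2))

section cutoff

variable {g : ℝ → ℝ} {c ε x : ℝ}

theorem cutoff_of_le (hg : |g x - x| < ε) (hx : x ≤ c) : cutoff g c ε x = g x := by
  obtain ⟨h₁, h₂⟩ := abs_lt.1 hg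
  unfold cutoff
  rw [min_eq_left ((by linarith : g x ≤ x + ε - (x - c) / 2).trans (le_max_right _ _)),
    max_eq_left ((min_le_right _ _).trans (by linarith))]

theorem cutoff_of_ge (hx : c + 2 * ε ≤ x) : cutoff g c ε x = x := by
  unfold cutoff
  rw [max_eq_left (by linarith : x + ε - (x - c) / 2 ≤ x),
    min_eq_left (by linarith : x ≤ x - ε + (x - c) / 2)]
  exact max_eq_right (min_le_right _ _)

theorem cutoff_of_apply_eq (hx : g x = x) : cutoff g c ε x = x := by
  unfold cutoff
  rw [hx, min_eq_left (le_max_left _ _), max_eq_left (min_le_left _ _)]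

theorem continuous_cutoff (hg : Continuous g) : Continuous (cutoff g c ε) := by
  unfold cutoff
  fun_prop

theorem strictMono_cutoff (hg : StrictMono g) : StrictMono (cutoff g c ε) := by
  have hσ : StrictMono fun x : ℝ => max x (x + ε - (x - c) / 2) :=
    fun x y h => max_lt_max h (by linarith)
  have hτ : StrictMono fun x : ℝ => min x (x - ε + (x - c) / 2) :=
    fun x y h => min_lt_min h (by linarith)
  exact fun x y h => max_lt_max (min_lt_min (hg h) (hσ h)) (hτ h)

end cutoff

theorem cutoff_mul_inv_mem_fragments {g : ℝ → ℝ} {c ε : ℝ}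
    (hg : ∀ x, |g x - x| < ε) {h h' : ℝ ≃o ℝ} (hh : ⇑h = cutoff g c ε)
    (hh' : ⇑h' = cutoff g (c + ε) ε) (hU : ∃ i, closedBall (c + ε) (2 * ε) ⊆ U i) :
    h' * h⁻¹ ∈ fragments U := by
  obtain ⟨i, hi⟩ := hU
  have hε : 0 < ε := (abs_nonneg _).trans_lt (hg c)
  have hagree : ∀ x ∉ Ioo c (c + 3 * ε), h' x = h x := by
    intro x hx
    rw [hh, hh']
    rcases le_or_gt x c with hxc | hxc
    · rw [cutoff_of_le (hg x) hxc, cutoff_of_le (hg x) (by linarith)]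
    · have : c + 3 * ε ≤ x := not_lt.1 fun hlt => hx ⟨hxc, hlt⟩
      rw [cutoff_of_ge (by linarith), cutoff_of_ge (by linarith)]
  refine mem_fragments_of_eq_self_outside (p := h c) (q := h (c + 3 * ε)) (i := i) ?_
    fun y hy => OrderIso.mul_inv_apply_eq_self_outside hagree hy
  rw [Real.closedBall_eq_Icc] at hi
  refine (Icc_subset_Icc ?_ ?_).trans hi
  · rw [hh, cutoff_of_le (hg c) le_rfl]
    linarith [(abs_lt.1 (hg c)).1]
  · rw [hh, cutoff_of_ge (by linarith)]
    linarith

theorem mem_closure_fragments_of_abs_sub_lt {g : ℝ ≃o ℝ} {a b ε : ℝ}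
    (hab : a ≤ b) (hg : ∀ x ∉ Ioo a b, g x = x) (hgε : ∀ x, |g x - x| < ε)
    (hU : ∀ c ∈ Icc (a - ε) (b + ε), ∃ i, closedBall c (2 * ε) ⊆ U i) :
    g ∈ Submonoid.closure (fragments U) := by
  have hε : 0 < ε := (abs_nonneg _).trans_lt (hgε a)
  choose h hh using fun c : ℝ =>
    (continuous_cutoff (c := c) (ε := ε) g.continuous).exists_orderIso_of_eq_self_outside
      (strictMono_cutoff g.strictMono) fun x hx => cutoff_of_apply_eq (hg x hx)
  set c : ℕ → ℝ := fun j => a - 2 * ε + j * ε with hc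
  set k := ⌈(b - a) / ε⌉₊ + 2
  have hck : b ≤ c k := by
    have := (div_le_iff₀ hε).1 (Nat.le_ceil ((b - a) / ε))
    simp only [hc, k]; push_cast; linarith
  have hstart : h (c 0) = 1 := by
    ext x
    rw [hh, RelIso.one_apply]
    rcases le_or_gt x a with hxa | hxa
    · exact cutoff_of_apply_eq (hg x fun hx => not_lt.2 hxa hx.1)
    · exact cutoff_of_ge (by simp only [hc]; push_cast; linarith)
  have hend : h (c k) = g := by
    ext x
    rw [hh]
    rcases le_or_gt x (c k) with hxc | hxc
    · exact cutoff_of_le (hgε x) hxc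
    · have hgx := hg x fun hx => not_lt.2 (hck.trans hxc.le) hx.2
      rw [cutoff_of_apply_eq hgx, hgx]
  rw [← hend]
  refine Submonoid.apply_mem_of_mul_inv_mem _ (fun j => h (c j)) (hstart ▸ one_mem _)
    fun j hj => Submonoid.subset_closure (cutoff_mul_inv_mem_fragments hgε (hh _) ?_ (hU _ ?_))
  · rw [hh]; simp only [hc]; push_cast; ring_nf
  · have hceil : (⌈(b - a) / ε⌉₊ : ℝ) * ε < b - a + ε := by
      have := mul_lt_mul_of_pos_right
        (Nat.ceil_lt_add_one (div_nonneg (sub_nonneg.2 hab) hε.le)) hε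
      rwa [add_mul, div_mul_cancel₀ _ hε.ne', one_mul] at this
    have hj' : (j : ℝ) * ε ≤ (⌈(b - a) / ε⌉₊ + 1) * ε :=
      mul_le_mul_of_nonneg_right (by exact_mod_cast Nat.le_of_lt_succ hj) hε.le
    have hj₀ : (0 : ℝ) ≤ j * ε := by positivity
    simp only [hc]
    constructor <;> linarith

theorem mem_closure_fragments_of_eq_self_outside {φ : ℝ ≃o ℝ} {a b ε : ℝ} (hab : a ≤ b)
    (hε : 0 < ε) (hφ : ∀ x ∉ Ioo a b, φ x = x)
    (hU : ∀ c ∈ Icc (a - ε) (b + ε), ∃ i, closedBall c (2 * ε) ⊆ U i) :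
    φ ∈ Submonoid.closure (fragments U) := by
  obtain ⟨M, hM⟩ : ∃ M, ∀ x, ‖φ x - x‖ ≤ M :=
    (φ.continuous.sub continuous_id).bounded_above_of_compact_support <|
      HasCompactSupport.intro isCompact_Icc fun x hx =>
        sub_eq_zero.2 (hφ x fun hx' => hx (Ioo_subset_Icc_self hx'))
  simp only [Real.norm_eq_abs] at hM
  obtain ⟨N, hN⟩ := exists_nat_gt (M / ε)
  have hN₀ : (0 : ℝ) < N := (div_nonneg ((abs_nonneg _).trans (hM 0)) hε.le).trans_lt hN
  choose P hP using fun i : ℕ =>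
    exists_orderIso_eq_add_mul_sub_self (t := (min i N : ℕ) / N) hφ (by positivity)
      (div_le_one_of_le₀ (by exact_mod_cast min_le_right i N) hN₀.le)
  have hPN : P N = φ := by
    ext x
    rw [hP, min_self, div_self hN₀.ne']
    ring
  have hP₀ : P 0 = 1 := by
    ext x
    simp [hP]
  rw [← hPN]
  refine Submonoid.apply_mem_of_mul_inv_mem _ P (hP₀ ▸ one_mem _) fun i hi => ?_
  have hPfix : ∀ j, ∀ x ∉ Ioo a b, P j x = x := fun j x hx => by simp [hP, hφ x hx]
  have hstep : ∀ x, (P (i + 1) * (P i)⁻¹) (P i x) = P i x + (φ x - x) / N := fun x => by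
    rw [RelIso.mul_apply, RelIso.inv_apply_self, hP, hP, min_eq_left hi.le, min_eq_left hi]
    push_cast
    ring
  refine mem_closure_fragments_of_abs_sub_lt hab (fun y hy => ?_) (fun y => ?_) hU
  · refine OrderIso.mul_inv_apply_eq_self_outside
      (fun x hx => by rw [hPfix _ x hx, hPfix _ x hx]) ?_
    rwa [hPfix i a fun h => lt_irrefl a h.1, hPfix i b fun h => lt_irrefl b h.2]
  · obtain ⟨x, rfl⟩ := (P i).surjective y
    rw [hstep, add_sub_cancel_left, abs_div, Nat.abs_cast, div_lt_iff₀ hN₀]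
    linarith [hM x, (div_lt_iff₀ hε).1 hN]

/-- Homeomorphisms of `[0,5]` fixing a neighbourhood of the boundary are encoded as continuous
strictly increasing maps `ℝ → ℝ` that are the identity outside `(δ, 5 - δ)`. -/
theorem fragmentation_interval_general (φ : ℝ → ℝ) (hcont : Continuous φ) (hmono : StrictMono φ)
    (δ : ℝ) (hδ : 0 < δ) (hδ' : δ < 5/2)
    (hid : ∀ x : ℝ, x ∉ Set.Ioo δ (5 - δ) → φ x = x)
    (m : ℕ) (U : Fin m → Set ℝ) (hUopen : ∀ i, IsOpen (U i))
    (hUcov : Set.Ioo (0:ℝ) 5 ⊆ ⋃ i, U i) :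
    ∃ (n : ℕ) (ψ : Fin n → (ℝ → ℝ)),
      (∀ s, Continuous (ψ s) ∧ StrictMono (ψ s)) ∧
      (∀ s, ∃ (i : Fin m) (K : Set ℝ), IsCompact K ∧ K ⊆ U i ∧ ∀ x ∉ K, ψ s x = x) ∧
      φ = (List.ofFn ψ).foldr (· ∘ ·) id := by
  obtain ⟨e, rfl⟩ := hcont.exists_orderIso_of_eq_self_outside hmono hid
  obtain ⟨L, hL, hball⟩ := lebesgue_number_lemma_of_metric (isCompact_Icc (a := δ / 2)
    (b := 5 - δ / 2)) hUopen fun x hx => hUcov ⟨by linarith [hx.1], by linarith [hx.2]⟩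
  set ε := min (L / 3) (δ / 2)
  have hε : 0 < ε := lt_min (by positivity) (by positivity)
  have hU : ∀ c ∈ Icc (δ - ε) (5 - δ + ε), ∃ i, closedBall c (2 * ε) ⊆ U i := by
    intro c hc
    have hεδ : ε ≤ δ / 2 := min_le_right _ _
    obtain ⟨i, hi⟩ := hball c ⟨by linarith [hc.1], by linarith [hc.2]⟩
    exact ⟨i, (closedBall_subset_ball (by linarith [min_le_left (L / 3) (δ / 2)])).trans hi⟩
  obtain ⟨l, hl, rfl⟩ := Submonoid.exists_list_of_mem_closure
    (mem_closure_fragments_of_eq_self_outside (by linarith) hε hid hU)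
  refine ⟨l.length, fun s => l[s], fun s => ⟨l[s].continuous, l[s].strictMono⟩,
    fun s => hl _ (List.getElem_mem _), ?_⟩
  rw [OrderIso.coe_list_prod, ← List.ofFn_getElem_eq_map l (⇑)]
  rfl

/-- Fragmentation for homeomorphisms of `[0,5]` supported away from the boundary.
Homeomorphisms of `[0,5]` that are the identity near the boundary are encoded as strictly
increasing continuous maps `ℝ → ℝ` that are the identity outside `(δ, 5-δ)`.
Given a finite open cover `U_1, …, U_m` of `(0,5)`, any such `φ` is a finite composite
`φ = φ_1 ∘ ⋯ ∘ φ_n` of orientation-preserving homeomorphisms, each the identity outside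
a compact subset of some `U_i`. -/
theorem fragmentation_interval (φ : ℝ → ℝ) (hcont : Continuous φ) (hmono : StrictMono φ)
    (δ : ℝ) (hδ : 0 < δ) (hδ' : δ < 5/2)
    (hid : ∀ x : ℝ, x ∉ Set.Ioo δ (5 - δ) → φ x = x)
    (m : ℕ) (U : Fin m → Set ℝ) (hUopen : ∀ i, IsOpen (U i))
    (hUsub : ∀ i, U i ⊆ Set.Ioo (0:ℝ) 5) (hUcov : Set.Ioo (0:ℝ) 5 ⊆ ⋃ i, U i) :
    ∃ (n : ℕ) (ψ : Fin n → (ℝ → ℝ)),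
      (∀ s, Continuous (ψ s) ∧ StrictMono (ψ s)) ∧
      (∀ s, ∃ (i : Fin m) (K : Set ℝ), IsCompact K ∧ K ⊆ U i ∧ ∀ x ∉ K, ψ s x = x) ∧
      φ = (List.ofFn ψ).foldr (· ∘ ·) id :=
  fragmentation_interval_general φ hcont hmono δ hδ hδ' hid m U hUopen hUcov
end
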